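/- arXiv:2501.05718 — 7 statements merged into one kernel-verified Lean document; each statement's English description precedes it below -/
import Mathlib

section
/- Let μ > 0 and σ_L > 0. Let L and n_L be independent real random variables with L ~ N(μ, 2μ) and n_L ~ N(0, σ_L²). Then the conditional probability satisfies P(L + n_L < 0 | L < 0) ≤ inf_{0 < s < 1/2} [ 1/2 + s + ((2 + μ)/√(2μ)) · exp(−√(π/2) · σ_L · s) ]. -/
open MeasureTheory ProbabilityTheory Real

section Aux

open Set

lemma gauss_pdf_even' (w : NNReal) (x : ℝ) :
    gaussianPDFReal 0 w (-x) = gaussianPDFReal 0 w x := by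
  simp [gaussianPDFReal]

lemma gauss_half' {w : NNReal} (hw : w ≠ 0) :
    (∫ x in Iio (0:ℝ), gaussianPDFReal 0 w x) = 1/2 := by
  have hint := integrable_gaussianPDFReal 0 w
  have h1 : (∫ x in Iio (0:ℝ), gaussianPDFReal 0 w x)
      + (∫ x in Ici (0:ℝ), gaussianPDFReal 0 w x) = 1 := by
    rw [intervalIntegral.integral_Iio_add_Ici hint.integrableOn hint.integrableOn,
      integral_gaussianPDFReal_eq_one 0 hw]
  have h2 : (∫ x in Iio (0:ℝ), gaussianPDFReal 0 w x)
      = ∫ x in Ici (0:ℝ), gaussianPDFReal 0 w x := by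
    have e1 : (∫ x in Iio (0:ℝ), gaussianPDFReal 0 w x)
        = ∫ x in Iic (0:ℝ), gaussianPDFReal 0 w x := by
      rw [Measure.restrict_congr_set Iio_ae_eq_Iic]
    have e2 := integral_comp_neg_Ioi (0:ℝ) (gaussianPDFReal 0 w)
    simp only [gauss_pdf_even', neg_zero] at e2
    have e3 : (∫ x in Ioi (0:ℝ), gaussianPDFReal 0 w x)
        = ∫ x in Ici (0:ℝ), gaussianPDFReal 0 w x := by
      rw [Measure.restrict_congr_set Ioi_ae_eq_Ici]
    rw [e1, ← e2, e3]
  linarith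

lemma pdf_shift_le' {μ a x : ℝ} (hμ : 0 < μ) (ha : 0 ≤ a) (hx : x ≤ 0) :
    gaussianPDFReal (μ + a) (2*μ).toNNReal x
      ≤ Real.exp (-a/2) * gaussianPDFReal μ (2*μ).toNNReal x := by
  have hv : ((2*μ).toNNReal : ℝ) = 2*μ := Real.coe_toNNReal _ (by positivity)
  unfold gaussianPDFReal
  rw [hv]
  have key : rexp (-(x-(μ+a))^2/(2*(2*μ))) ≤ rexp (-a/2 + -(x-μ)^2/(2*(2*μ))) := by
    apply Real.exp_le_exp.2
    rw [← sub_nonneg]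
    have heq : -a/2 + -(x-μ)^2/(2*(2*μ)) - -(x-(μ+a))^2/(2*(2*μ))
        = (a^2 - 2*a*x)/(2*(2*μ)) := by
      field_simp
      ring
    rw [heq]
    exact div_nonneg (by nlinarith) (by positivity)
  calc (Real.sqrt (2*π*(2*μ)))⁻¹ * rexp (-(x-(μ+a))^2/(2*(2*μ)))
      ≤ (Real.sqrt (2*π*(2*μ)))⁻¹ * rexp (-a/2 + -(x-μ)^2/(2*(2*μ))) :=
        mul_le_mul_of_nonneg_left key (by positivity)
    _ = Real.exp (-a/2) * ((Real.sqrt (2*π*(2*μ)))⁻¹ * rexp (-(x-μ)^2/(2*(2*μ)))) := by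
        rw [Real.exp_add]; ring

lemma pdf_const_le' {σ : ℝ} (hσ : 0 < σ) (x : ℝ) :
    gaussianPDFReal 0 (σ^2).toNNReal x ≤ (Real.sqrt (2*Real.pi) * σ)⁻¹ := by
  have hv : (((σ^2).toNNReal) : ℝ) = σ^2 := Real.coe_toNNReal _ (by positivity)
  unfold gaussianPDFReal
  rw [hv]
  have h1 : Real.sqrt (2 * Real.pi * σ^2) = Real.sqrt (2*Real.pi) * σ := by
    rw [Real.sqrt_mul (by positivity), Real.sqrt_sq hσ.le]
  rw [h1]
  calc (Real.sqrt (2*Real.pi) * σ)⁻¹ * Real.exp (-(x-0)^2 / (2*σ^2))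
      ≤ (Real.sqrt (2*Real.pi) * σ)⁻¹ * 1 := by
        apply mul_le_mul_of_nonneg_left _ (by positivity)
        exact Real.exp_le_one_iff.2 (div_nonpos_of_nonpos_of_nonneg
          (neg_nonpos.2 (sq_nonneg _)) (by positivity))
    _ = (Real.sqrt (2*Real.pi) * σ)⁻¹ := mul_one _

lemma gauss_Iio_pos' {m : ℝ} {v : NNReal} (hv : v ≠ 0) (c : ℝ) :
    0 < ∫ x in Iio c, gaussianPDFReal m v x := by
  rw [setIntegral_pos_iff_support_of_nonneg_ae
    (ae_of_all _ (fun x => gaussianPDFReal_nonneg m v x))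
    (integrable_gaussianPDFReal m v).integrableOn]
  have hs : Function.support (gaussianPDFReal m v) = univ := by
    ext x
    simp [Function.mem_support, (gaussianPDFReal_pos m v x hv).ne']
  rw [hs, univ_inter]
  simp [Real.volume_Iio]

lemma tail_shift' {μ a : ℝ} (hμ : 0 < μ) (ha : 0 ≤ a) :
    (gaussianReal μ (2*μ).toNNReal (Iio (-a))).toReal
      ≤ Real.exp (-a/2) * (gaussianReal μ (2*μ).toNNReal (Iio 0)).toReal := by
  have hv : (2*μ).toNNReal ≠ 0 := by
    simp only [ne_eq, Real.toNNReal_eq_zero, not_le]; positivity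
  have hmap := gaussianReal_map_add_const (μ := μ) (v := (2*μ).toNNReal) a
  have h1 : gaussianReal μ (2*μ).toNNReal (Iio (-a))
      = gaussianReal (μ + a) (2*μ).toNNReal (Iio 0) := by
    rw [← hmap, Measure.map_apply (measurable_add_const a) measurableSet_Iio]
    congr 1
    ext x
    simp only [mem_preimage, mem_Iio, id_eq]
    constructor <;> intro h <;> linarith
  rw [h1, gaussianReal_apply_eq_integral _ hv, gaussianReal_apply_eq_integral _ hv,
    ENNReal.toReal_ofReal (setIntegral_nonneg measurableSet_Iio
      (fun x _ => gaussianPDFReal_nonneg _ _ x)),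
    ENNReal.toReal_ofReal (setIntegral_nonneg measurableSet_Iio
      (fun x _ => gaussianPDFReal_nonneg _ _ x))]
  calc (∫ x in Iio (0:ℝ), gaussianPDFReal (μ+a) (2*μ).toNNReal x)
      ≤ ∫ x in Iio (0:ℝ), Real.exp (-a/2) * gaussianPDFReal μ (2*μ).toNNReal x := by
        apply setIntegral_mono_on (integrable_gaussianPDFReal _ _).integrableOn
          ((integrable_gaussianPDFReal μ _).const_mul _).integrableOn measurableSet_Iio
        exact fun x hx => pdf_shift_le' hμ ha (le_of_lt hx)
    _ = Real.exp (-a/2) * ∫ x in Iio (0:ℝ), gaussianPDFReal μ (2*μ).toNNReal x :=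
        integral_const_mul _ _

lemma mid_bound' {σ a : ℝ} (hσ : 0 < σ) (ha : 0 ≤ a) :
    (gaussianReal 0 (σ^2).toNNReal (Ico 0 a)).toReal
      ≤ a * (Real.sqrt (2*Real.pi) * σ)⁻¹ := by
  have hw : (σ^2).toNNReal ≠ 0 := by
    simp only [ne_eq, Real.toNNReal_eq_zero, not_le]; positivity
  rw [gaussianReal_apply_eq_integral _ hw,
    ENNReal.toReal_ofReal (setIntegral_nonneg measurableSet_Ico
      (fun x _ => gaussianPDFReal_nonneg _ _ x))]
  calc (∫ x in Ico (0:ℝ) a, gaussianPDFReal 0 (σ^2).toNNReal x)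
      ≤ ∫ _x in Ico (0:ℝ) a, (Real.sqrt (2*Real.pi) * σ)⁻¹ := by
        apply setIntegral_mono_on (integrable_gaussianPDFReal _ _).integrableOn
          (integrableOn_const (by rw [Real.volume_Ico]; exact ENNReal.ofReal_ne_top))
          measurableSet_Ico
        exact fun x _ => pdf_const_le' hσ x
    _ = (a - 0) * (Real.sqrt (2*Real.pi) * σ)⁻¹ := by
        rw [setIntegral_const, measureReal_def, Real.volume_Ico, smul_eq_mul,
          ENNReal.toReal_ofReal (by linarith)]
    _ = a * (Real.sqrt (2*Real.pi) * σ)⁻¹ := by ring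

end Aux

/-- Proposition 3: bound on the conditional probability that a Gaussian perturbation
fails to correct the sign of a negative Gaussian LLR. -/
theorem perturbation_conditional_bound
    {Ω : Type*} [MeasureSpace Ω] [IsProbabilityMeasure (ℙ : Measure Ω)]
    (μ σL : ℝ) (hμ : 0 < μ) (hσL : 0 < σL)
    (L nL : Ω → ℝ) (hLmeas : Measurable L) (hnmeas : Measurable nL)
    (hLdist : Measure.map L ℙ = gaussianReal μ (2 * μ).toNNReal)
    (hndist : Measure.map nL ℙ = gaussianReal 0 (σL ^ 2).toNNReal)
    (hindep : IndepFun L nL ℙ) :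
    (ℙ ({ω | L ω + nL ω < 0} ∩ {ω | L ω < 0})).toReal / (ℙ {ω | L ω < 0}).toReal ≤
      ⨅ s : Set.Ioo (0 : ℝ) (1 / 2),
        (1 / 2 + (s : ℝ) +
          (2 + μ) / Real.sqrt (2 * μ) *
            Real.exp (-(Real.sqrt (Real.pi / 2)) * σL * (s : ℝ))) := by
  have hv : (2*μ).toNNReal ≠ 0 := by
    simp only [ne_eq, Real.toNNReal_eq_zero, not_le]; positivity
  have hw : (σL^2).toNNReal ≠ 0 := by
    simp only [ne_eq, Real.toNNReal_eq_zero, not_le]; positivity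
  have hsqrt2pi : 0 < Real.sqrt (2*Real.pi) := Real.sqrt_pos.2 (by positivity)
  -- the denominator
  have hLpre : ∀ c : ℝ, ℙ (L ⁻¹' Set.Iio c) = gaussianReal μ (2*μ).toNNReal (Set.Iio c) := by
    intro c
    rw [← hLdist, Measure.map_apply hLmeas measurableSet_Iio]
  have hp_eq : (ℙ {ω | L ω < 0}).toReal
      = ∫ x in Set.Iio (0:ℝ), gaussianPDFReal μ (2*μ).toNNReal x := by
    have : {ω | L ω < 0} = L ⁻¹' Set.Iio 0 := rfl
    rw [this, hLpre 0, gaussianReal_apply_eq_integral _ hv,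
      ENNReal.toReal_ofReal (setIntegral_nonneg measurableSet_Iio
        (fun x _ => gaussianPDFReal_nonneg _ _ x))]
  set p := (ℙ {ω | L ω < 0}).toReal with hp_def
  have hp_pos : 0 < p := by rw [hp_eq]; exact gauss_Iio_pos' hv 0
  -- constant C ≥ 1
  have hC1 : 1 ≤ (2 + μ) / Real.sqrt (2*μ) := by
    rw [le_div_iff₀ (Real.sqrt_pos.2 (by positivity))]
    nlinarith [Real.sq_sqrt (by positivity : (0:ℝ) ≤ 2*μ), Real.sqrt_nonneg (2*μ),
      sq_nonneg (Real.sqrt (2*μ) - 2)]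
  haveI : Nonempty (Set.Ioo (0:ℝ) (1/2)) := ⟨⟨1/4, by norm_num⟩⟩
  apply le_ciInf
  rintro ⟨s, hs0, hs2⟩
  simp only
  set a := Real.sqrt (2*Real.pi) * σL * s with ha_def
  have ha0 : 0 ≤ a := by positivity
  -- inclusion of events
  have hsub : {ω | L ω + nL ω < 0} ∩ {ω | L ω < 0} ⊆
      (L ⁻¹' Set.Iio 0 ∩ nL ⁻¹' Set.Iio 0) ∪ (L ⁻¹' Set.Iio 0 ∩ nL ⁻¹' Set.Ico 0 a)
        ∪ L ⁻¹' Set.Iio (-a) := by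
    rintro ω ⟨h1, h2⟩
    simp only [Set.mem_setOf_eq] at h1 h2
    simp only [Set.mem_union, Set.mem_inter_iff, Set.mem_preimage, Set.mem_Iio, Set.mem_Ico]
    by_cases hn : nL ω < 0
    · exact Or.inl (Or.inl ⟨h2, hn⟩)
    · by_cases hn2 : nL ω < a
      · exact Or.inl (Or.inr ⟨h2, le_of_not_gt hn, hn2⟩)
      · push_neg at hn hn2
        exact Or.inr (by linarith)
  -- measure bound
  have hle : ℙ ({ω | L ω + nL ω < 0} ∩ {ω | L ω < 0})
      ≤ ℙ (L ⁻¹' Set.Iio 0 ∩ nL ⁻¹' Set.Iio 0) + ℙ (L ⁻¹' Set.Iio 0 ∩ nL ⁻¹' Set.Ico 0 a)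
        + ℙ (L ⁻¹' Set.Iio (-a)) :=
    (measure_mono hsub).trans ((measure_union_le _ _).trans
      (add_le_add_left (measure_union_le _ _) _))
  have htr : (ℙ ({ω | L ω + nL ω < 0} ∩ {ω | L ω < 0})).toReal
      ≤ (ℙ (L ⁻¹' Set.Iio 0 ∩ nL ⁻¹' Set.Iio 0)).toReal
        + (ℙ (L ⁻¹' Set.Iio 0 ∩ nL ⁻¹' Set.Ico 0 a)).toReal
        + (ℙ (L ⁻¹' Set.Iio (-a))).toReal := by
    have hfin : ℙ (L ⁻¹' Set.Iio 0 ∩ nL ⁻¹' Set.Iio 0)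
        + ℙ (L ⁻¹' Set.Iio 0 ∩ nL ⁻¹' Set.Ico 0 a) + ℙ (L ⁻¹' Set.Iio (-a)) ≠ ⊤ := by
      exact ENNReal.add_ne_top.2 ⟨ENNReal.add_ne_top.2 ⟨measure_ne_top _ _, measure_ne_top _ _⟩,
        measure_ne_top _ _⟩
    have := ENNReal.toReal_mono hfin hle
    rwa [ENNReal.toReal_add (ENNReal.add_ne_top.2 ⟨measure_ne_top _ _, measure_ne_top _ _⟩)
      (measure_ne_top _ _), ENNReal.toReal_add (measure_ne_top _ _) (measure_ne_top _ _)] at this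
  -- term 1
  have h1 : (ℙ (L ⁻¹' Set.Iio 0 ∩ nL ⁻¹' Set.Iio 0)).toReal = p * (1/2) := by
    rw [hindep.measure_inter_preimage_eq_mul _ _ measurableSet_Iio measurableSet_Iio,
      ENNReal.toReal_mul]
    congr 1
    rw [← Measure.map_apply hnmeas measurableSet_Iio, hndist,
      gaussianReal_apply_eq_integral _ hw,
      ENNReal.toReal_ofReal (setIntegral_nonneg measurableSet_Iio
        (fun x _ => gaussianPDFReal_nonneg _ _ x)), gauss_half' hw]
  -- term 2
  have h2 : (ℙ (L ⁻¹' Set.Iio 0 ∩ nL ⁻¹' Set.Ico 0 a)).toReal ≤ p * s := by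
    rw [hindep.measure_inter_preimage_eq_mul _ _ measurableSet_Iio measurableSet_Ico,
      ENNReal.toReal_mul]
    apply mul_le_mul_of_nonneg_left _ ENNReal.toReal_nonneg
    have : ℙ (nL ⁻¹' Set.Ico 0 a) = gaussianReal 0 (σL^2).toNNReal (Set.Ico 0 a) := by
      rw [← hndist, Measure.map_apply hnmeas measurableSet_Ico]
    rw [this]
    calc (gaussianReal 0 (σL^2).toNNReal (Set.Ico 0 a)).toReal
        ≤ a * (Real.sqrt (2*Real.pi) * σL)⁻¹ := mid_bound' hσL ha0
      _ = s := by
          rw [ha_def]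
          field_simp
  -- term 3
  have h3 : (ℙ (L ⁻¹' Set.Iio (-a))).toReal
      ≤ ((2 + μ) / Real.sqrt (2*μ) * Real.exp (-(Real.sqrt (Real.pi/2)) * σL * s)) * p := by
    have he : -a/2 = -(Real.sqrt (Real.pi/2)) * σL * s := by
      have h4 : Real.sqrt (Real.pi/2) = Real.sqrt (2*Real.pi) / 2 := by
        rw [show Real.pi/2 = (2*Real.pi)/4 by ring, Real.sqrt_div (by positivity) 4,
          show (4:ℝ) = 2^2 by norm_num, Real.sqrt_sq (by norm_num : (0:ℝ) ≤ 2)]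
      rw [h4, ha_def]
      ring
    have ht := tail_shift' hμ ha0
    rw [hLpre (-a)]
    calc (gaussianReal μ (2*μ).toNNReal (Set.Iio (-a))).toReal
        ≤ Real.exp (-a/2) * (gaussianReal μ (2*μ).toNNReal (Set.Iio 0)).toReal := ht
      _ = Real.exp (-(Real.sqrt (Real.pi/2)) * σL * s)
            * (gaussianReal μ (2*μ).toNNReal (Set.Iio 0)).toReal := by rw [he]
      _ ≤ ((2 + μ) / Real.sqrt (2*μ)) * Real.exp (-(Real.sqrt (Real.pi/2)) * σL * s)
            * (gaussianReal μ (2*μ).toNNReal (Set.Iio 0)).toReal := by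
          apply mul_le_mul_of_nonneg_right _ ENNReal.toReal_nonneg
          exact le_mul_of_one_le_left (Real.exp_nonneg _) hC1
      _ = ((2 + μ) / Real.sqrt (2*μ) * Real.exp (-(Real.sqrt (Real.pi/2)) * σL * s)) * p := by
          rw [hp_eq, gaussianReal_apply_eq_integral _ hv,
            ENNReal.toReal_ofReal (setIntegral_nonneg measurableSet_Iio
              (fun x _ => gaussianPDFReal_nonneg _ _ x))]
  rw [div_le_iff₀ hp_pos]
  have := htr
  nlinarith [Real.exp_nonneg (-(Real.sqrt (Real.pi/2)) * σL * s), hp_pos,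
    mul_nonneg (mul_nonneg (by positivity : (0:ℝ) ≤ (2+μ)/Real.sqrt (2*μ))
      (Real.exp_nonneg (-(Real.sqrt (Real.pi/2)) * σL * s))) hp_pos.le]
end

section
/- Let μ > 0 and σ_L > 0. Let L and n_L be independent real random variables with L ~ N(μ, 2μ) and n_L ~ N(0, σ_L²). Then for every s ∈ (0, 1/2), P(L < 0 and L + n_L < 0) ≤ (1/2 + s) · P(L < 0) + Q( (√(2π)·σ_L·s + μ) / √(2μ) ). -/
open MeasureTheory ProbabilityTheory Real
open scoped NNReal ENNReal

/-- The standard normal tail function `Q x = P(Z ≥ x)` for `Z ~ N(0,1)`. -/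
noncomputable def Q (x : ℝ) : ℝ := ((gaussianReal 0 1) {y | x ≤ y}).toReal

lemma gauss_neg_map (v : ℝ≥0) :
    (gaussianReal 0 v).map (fun x => -x) = gaussianReal 0 v := by
  have h1 : (NNReal.mk ((-1:ℝ)^2) (sq_nonneg _)) = 1 := by ext; norm_num
  have h := gaussianReal_map_const_mul (μ := 0) (v := v) (-1)
  simp only [neg_one_mul, h1, one_mul, neg_zero] at h
  exact h

lemma gauss_eq_map (m : ℝ) (v : ℝ≥0) (hv : v ≠ 0) :
    gaussianReal m v = (gaussianReal 0 1).map (fun x => Real.sqrt v * x + m) := by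
  have hvv : (NNReal.mk ((Real.sqrt v)^2) (sq_nonneg _)) * 1 = v := by
    rw [mul_one]; ext; simp [Real.sq_sqrt v.coe_nonneg]
  have h1 : (gaussianReal 0 1).map (fun x => Real.sqrt v * x) = gaussianReal 0 v := by
    have h := gaussianReal_map_const_mul (μ := 0) (v := 1) (Real.sqrt v)
    rw [hvv, mul_zero] at h
    exact h
  have h2 : (gaussianReal 0 v).map (· + m) = gaussianReal m v := by
    have h := gaussianReal_map_add_const (μ := 0) (v := v) m
    rwa [zero_add] at h
  rw [← h2, ← h1, Measure.map_map (measurable_add_const m)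
    (by fun_prop : Measurable fun x : ℝ => Real.sqrt v * x)]
  rfl

lemma gauss_symm (v : ℝ≥0) (c : ℝ) :
    (gaussianReal 0 v) (Set.Iic (-c)) = (gaussianReal 0 v) {x | c ≤ x} := by
  conv_lhs => rw [← gauss_neg_map v]
  rw [Measure.map_apply (measurable_neg : Measurable fun x : ℝ => -x) measurableSet_Iic]
  congr 1
  ext x
  simp [neg_le]

lemma gauss_symm' (v : ℝ≥0) :
    (gaussianReal 0 v) (Set.Iio 0) = (gaussianReal 0 v) (Set.Ioi 0) := by
  conv_lhs => rw [← gauss_neg_map v]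
  rw [Measure.map_apply (measurable_neg : Measurable fun x : ℝ => -x) measurableSet_Iio]
  congr 1
  ext x
  simp

lemma gauss_half (v : ℝ≥0) : ((gaussianReal 0 v) (Set.Iio 0)).toReal ≤ 1/2 := by
  have e2 : (gaussianReal 0 v) (Set.Iio 0) + (gaussianReal 0 v) (Set.Iio (0:ℝ))ᶜ = 1 := by
    rw [measure_add_measure_compl measurableSet_Iio, measure_univ]
  have hc : (Set.Iio (0:ℝ))ᶜ = Set.Ici 0 := by ext x; simp [not_lt]
  have hmono : (gaussianReal 0 v) (Set.Ioi 0) ≤ (gaussianReal 0 v) (Set.Ici 0) :=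
    measure_mono Set.Ioi_subset_Ici_self
  rw [gauss_symm'] at e2 ⊢
  rw [hc] at e2
  have h1 : ((gaussianReal 0 v) (Set.Ioi 0)).toReal +
      ((gaussianReal 0 v) (Set.Ici 0)).toReal = 1 := by
    rw [← ENNReal.toReal_add (measure_ne_top _ _) (measure_ne_top _ _), e2, ENNReal.toReal_one]
  have h2 : ((gaussianReal 0 v) (Set.Ioi 0)).toReal ≤
      ((gaussianReal 0 v) (Set.Ici 0)).toReal :=
    ENNReal.toReal_mono (measure_ne_top _ _) hmono
  linarith

lemma gauss_strip (v : ℝ≥0) (hv : v ≠ 0) (a : ℝ) (ha : 0 ≤ a) :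
    ((gaussianReal 0 v) (Set.Ico 0 a)).toReal ≤ (Real.sqrt (2 * π * v))⁻¹ * a := by
  rw [gaussianReal_apply 0 hv]
  have hb : ∀ x, gaussianPDF 0 v x ≤ ENNReal.ofReal ((Real.sqrt (2 * π * v))⁻¹) := by
    intro x
    refine ENNReal.ofReal_le_ofReal ?_
    unfold gaussianPDFReal
    have hexp : rexp (-(x - 0)^2 / (2 * v)) ≤ 1 := by
      rw [Real.exp_le_one_iff]
      apply div_nonpos_of_nonpos_of_nonneg
      · simp [sq_nonneg]
      · positivity
    have hnn : (0:ℝ) ≤ (Real.sqrt (2 * π * v))⁻¹ := by positivity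
    calc (Real.sqrt (2 * π * v))⁻¹ * rexp (-(x - 0)^2 / (2 * v))
        ≤ (Real.sqrt (2 * π * v))⁻¹ * 1 := mul_le_mul_of_nonneg_left hexp hnn
      _ = (Real.sqrt (2 * π * v))⁻¹ := mul_one _
  have hle : ∫⁻ x in Set.Ico 0 a, gaussianPDF 0 v x ≤
      ENNReal.ofReal ((Real.sqrt (2 * π * v))⁻¹ * a) := by
    calc ∫⁻ x in Set.Ico 0 a, gaussianPDF 0 v x
        ≤ ∫⁻ _ in Set.Ico 0 a, ENNReal.ofReal ((Real.sqrt (2 * π * v))⁻¹) :=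
          lintegral_mono hb
      _ = ENNReal.ofReal ((Real.sqrt (2 * π * v))⁻¹) * volume (Set.Ico 0 a) := by
          rw [setLIntegral_const]
      _ = ENNReal.ofReal ((Real.sqrt (2 * π * v))⁻¹) * ENNReal.ofReal a := by
          rw [Real.volume_Ico, sub_zero]
      _ = ENNReal.ofReal ((Real.sqrt (2 * π * v))⁻¹ * a) := by
          rw [← ENNReal.ofReal_mul (by positivity)]
  calc (∫⁻ x in Set.Ico 0 a, gaussianPDF 0 v x).toReal
      ≤ (ENNReal.ofReal ((Real.sqrt (2 * π * v))⁻¹ * a)).toReal :=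
        ENNReal.toReal_mono ENNReal.ofReal_ne_top hle
    _ = (Real.sqrt (2 * π * v))⁻¹ * a := ENNReal.toReal_ofReal (by positivity)

lemma gauss_tail (m : ℝ) (v : ℝ≥0) (hv : v ≠ 0) (t : ℝ) :
    ((gaussianReal m v) (Set.Iic (-t))).toReal = Q ((t + m) / Real.sqrt v) := by
  have hvpos : 0 < (v:ℝ) := by positivity
  have hs : 0 < Real.sqrt v := Real.sqrt_pos.2 hvpos
  rw [gauss_eq_map m v hv, Measure.map_apply
    (by fun_prop : Measurable fun x : ℝ => Real.sqrt v * x + m) measurableSet_Iic]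
  have hpre : (fun x => Real.sqrt v * x + m) ⁻¹' (Set.Iic (-t))
      = Set.Iic (-((t + m) / Real.sqrt v)) := by
    ext x
    simp only [Set.mem_preimage, Set.mem_Iic]
    rw [← neg_div, le_div_iff₀ hs]
    constructor <;> intro h <;> nlinarith
  rw [hpre, gauss_symm]
  rfl

/-- The key pointwise inequality in the proof of Proposition 3. -/
theorem perturbation_pointwise_bound
    {Ω : Type*} [MeasureSpace Ω] [IsProbabilityMeasure (ℙ : Measure Ω)]
    (μ σL : ℝ) (hμ : 0 < μ) (hσL : 0 < σL)
    (L nL : Ω → ℝ) (hLmeas : Measurable L) (hnmeas : Measurable nL)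
    (hLdist : Measure.map L ℙ = gaussianReal μ (2 * μ).toNNReal)
    (hndist : Measure.map nL ℙ = gaussianReal 0 (σL ^ 2).toNNReal)
    (hindep : IndepFun L nL ℙ) :
    ∀ s : ℝ, s ∈ Set.Ioo (0 : ℝ) (1 / 2) →
      (ℙ {ω | L ω < 0 ∧ L ω + nL ω < 0}).toReal ≤
        (1 / 2 + s) * (ℙ {ω | L ω < 0}).toReal +
          Q ((Real.sqrt (2 * Real.pi) * σL * s + μ) / Real.sqrt (2 * μ)) := by
  intro s hs
  obtain ⟨hs0, _⟩ := hs
  set a : ℝ := Real.sqrt (2 * Real.pi) * σL * s with ha_def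
  have hpi : (0:ℝ) < 2 * Real.pi := by positivity
  have ha : 0 < a := by positivity
  have hv2 : ((2 * μ).toNNReal : ℝ) = 2 * μ := Real.coe_toNNReal _ (by linarith)
  have hv2ne : (2 * μ).toNNReal ≠ 0 := (Real.toNNReal_pos.mpr (by linarith)).ne'
  have hvσ : ((σL ^ 2).toNNReal : ℝ) = σL ^ 2 := Real.coe_toNNReal _ (sq_nonneg _)
  have hvσne : (σL ^ 2).toNNReal ≠ 0 := (Real.toNNReal_pos.mpr (by positivity)).ne'
  -- event inclusion
  have hsub : {ω | L ω < 0 ∧ L ω + nL ω < 0} ⊆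
      (L ⁻¹' Set.Iio 0 ∩ nL ⁻¹' Set.Iio a) ∪ L ⁻¹' Set.Iic (-a) := by
    rintro ω ⟨h1, h2⟩
    by_cases h3 : L ω ≤ -a
    · exact Or.inr h3
    · push_neg at h3
      exact Or.inl ⟨h1, show nL ω < a by linarith⟩
  have hle1 : ℙ {ω | L ω < 0 ∧ L ω + nL ω < 0} ≤
      ℙ (L ⁻¹' Set.Iio 0 ∩ nL ⁻¹' Set.Iio a) + ℙ (L ⁻¹' Set.Iic (-a)) :=
    (measure_mono hsub).trans (measure_union_le _ _)
  have hmul : ℙ (L ⁻¹' Set.Iio 0 ∩ nL ⁻¹' Set.Iio a)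
      = ℙ (L ⁻¹' Set.Iio 0) * ℙ (nL ⁻¹' Set.Iio a) :=
    hindep.measure_inter_preimage_eq_mul _ _ measurableSet_Iio measurableSet_Iio
  rw [hmul] at hle1
  have h2 : (ℙ {ω | L ω < 0 ∧ L ω + nL ω < 0}).toReal ≤
      (ℙ (L ⁻¹' Set.Iio 0)).toReal * (ℙ (nL ⁻¹' Set.Iio a)).toReal
        + (ℙ (L ⁻¹' Set.Iic (-a))).toReal := by
    have := ENNReal.toReal_mono (by finiteness) hle1
    rwa [ENNReal.toReal_add (by finiteness) (measure_ne_top _ _), ENNReal.toReal_mul] at this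
  -- tail term
  have htail : (ℙ (L ⁻¹' Set.Iic (-a))).toReal = Q ((a + μ) / Real.sqrt (2 * μ)) := by
    rw [← Measure.map_apply hLmeas measurableSet_Iic, hLdist]
    rw [gauss_tail μ _ hv2ne a, hv2]
  -- noise term
  have hnoise : (ℙ (nL ⁻¹' Set.Iio a)).toReal ≤ 1 / 2 + s := by
    have heq : ℙ (nL ⁻¹' Set.Iio a) = gaussianReal 0 (σL ^ 2).toNNReal (Set.Iio a) := by
      rw [← hndist, Measure.map_apply hnmeas measurableSet_Iio]
    have hsplit : Set.Iio a ⊆ Set.Iio (0:ℝ) ∪ Set.Ico 0 a := by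
      intro y hy
      by_cases h : y < 0
      · exact Or.inl h
      · exact Or.inr ⟨not_lt.mp h, hy⟩
    have hm : gaussianReal 0 (σL ^ 2).toNNReal (Set.Iio a) ≤
        gaussianReal 0 (σL ^ 2).toNNReal (Set.Iio (0:ℝ))
          + gaussianReal 0 (σL ^ 2).toNNReal (Set.Ico 0 a) :=
      (measure_mono hsplit).trans (measure_union_le _ _)
    have hmr := ENNReal.toReal_mono (by finiteness) hm
    rw [ENNReal.toReal_add (measure_ne_top _ _) (measure_ne_top _ _)] at hmr
    have hhalf := gauss_half (σL ^ 2).toNNReal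
    have hstrip := gauss_strip (σL ^ 2).toNNReal hvσne a ha.le
    have hc : Real.sqrt (2 * π * ((σL ^ 2).toNNReal : ℝ)) = Real.sqrt (2 * π) * σL := by
      rw [hvσ, Real.sqrt_mul (by positivity), Real.sqrt_sq hσL.le]
    have hcs : (Real.sqrt (2 * π * ((σL ^ 2).toNNReal : ℝ)))⁻¹ * a = s := by
      rw [hc, ha_def]
      have hne : Real.sqrt (2 * π) * σL ≠ 0 := by positivity
      field_simp
    rw [heq]
    calc (gaussianReal 0 (σL ^ 2).toNNReal (Set.Iio a)).toReal
        ≤ (gaussianReal 0 (σL ^ 2).toNNReal (Set.Iio (0:ℝ))).toReal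
          + (gaussianReal 0 (σL ^ 2).toNNReal (Set.Ico 0 a)).toReal := hmr
      _ ≤ 1 / 2 + s := by
          rw [← hcs]
          exact add_le_add hhalf hstrip
  -- combine
  have hset : {ω | L ω < 0} = L ⁻¹' Set.Iio 0 := rfl
  rw [hset]
  refine h2.trans ?_
  rw [htail]
  have hp0 : 0 ≤ (ℙ (L ⁻¹' Set.Iio 0)).toReal := ENNReal.toReal_nonneg
  have hfin : (ℙ (L ⁻¹' Set.Iio 0)).toReal * (ℙ (nL ⁻¹' Set.Iio a)).toReal ≤
      (1 / 2 + s) * (ℙ (L ⁻¹' Set.Iio 0)).toReal := by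
    rw [mul_comm ((1:ℝ)/2 + s)]
    exact mul_le_mul_of_nonneg_left hnoise hp0
  linarith
end

section
/- Let μ ≥ 2 and c ≥ 0. Then Q( (c + μ) / √(2μ) ) ≤ ((2 + μ)/√(2μ)) · exp(−c/2) · Q( √(μ/2) ). -/
open MeasureTheory ProbabilityTheory Real

lemma Q_eq (x : ℝ) : Q x = ∫ t in Set.Ici x, gaussianPDFReal 0 1 t := by
  have h : {y : ℝ | x ≤ y} = Set.Ici x := rfl
  rw [Q, h, gaussianReal_apply_eq_integral 0 one_ne_zero,
    ENNReal.toReal_ofReal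
      (setIntegral_nonneg measurableSet_Ici fun t _ ↦ gaussianPDFReal_nonneg 0 1 t)]

lemma Q_shift {a d : ℝ} (ha : 0 ≤ a) (hd : 0 ≤ d) :
    Q (a + d) ≤ Real.exp (-(a * d)) * Q a := by
  rw [Q_eq, Q_eq]
  have hmp : MeasurePreserving (fun x : ℝ ↦ x + d) volume volume :=
    measurePreserving_add_right volume d
  have hpre : (fun x : ℝ ↦ x + d) ⁻¹' Set.Ici (a + d) = Set.Ici a := by
    ext t; simp
  calc ∫ t in Set.Ici (a + d), gaussianPDFReal 0 1 t
      = ∫ t in Set.Ici a, gaussianPDFReal 0 1 (t + d) := by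
        rw [← hmp.setIntegral_preimage_emb (measurableEmbedding_addRight d), hpre]
    _ ≤ ∫ t in Set.Ici a, Real.exp (-(a * d)) * gaussianPDFReal 0 1 t := by
        apply setIntegral_mono_on
        · exact ((integrable_gaussianPDFReal 0 1).comp_add_right d).restrict
        · exact ((integrable_gaussianPDFReal 0 1).restrict.const_mul _)
        · exact measurableSet_Ici
        · intro t ht
          simp only [gaussianPDFReal, NNReal.coe_one, mul_one, sub_zero]
          rw [mul_left_comm, ← Real.exp_add]
          have hta : a ≤ t := ht
          refine mul_le_mul_of_nonneg_left ?_ (by positivity)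
          rw [Real.exp_le_exp]
          nlinarith [sq_nonneg d]
    _ = Real.exp (-(a * d)) * ∫ t in Set.Ici a, gaussianPDFReal 0 1 t := by
        rw [integral_const_mul]

/-- The Gaussian tail ratio bound used in the proof of Proposition 3. -/
theorem gaussian_tail_ratio_bound (μ c : ℝ) (hμ : 2 ≤ μ) (hc : 0 ≤ c) :
    Q ((c + μ) / Real.sqrt (2 * μ)) ≤
      (2 + μ) / Real.sqrt (2 * μ) * Real.exp (-c / 2) * Q (Real.sqrt (μ / 2)) := by
  set a := Real.sqrt (μ / 2) with ha_def
  have hμ0 : (0:ℝ) < μ := by linarith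
  have ha2 : a ^ 2 = μ / 2 := Real.sq_sqrt (by linarith)
  have ha0 : 0 < a := Real.sqrt_pos.mpr (by linarith)
  have hs : Real.sqrt (2 * μ) = 2 * a := by
    rw [show 2 * μ = (2 * a) ^ 2 by nlinarith, Real.sqrt_sq (by positivity)]
  have hb : (c + μ) / Real.sqrt (2 * μ) = a + c / (2 * a) := by
    rw [hs]; field_simp; nlinarith
  have had : a * (c / (2 * a)) = c / 2 := by field_simp
  have h1 : Q ((c + μ) / Real.sqrt (2 * μ)) ≤ Real.exp (-c / 2) * Q a := by
    rw [hb]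
    have := Q_shift (a := a) (d := c / (2 * a)) ha0.le (by positivity)
    rwa [had, show -(c/2) = -c/2 by ring] at this
  have hQ0 : 0 ≤ Q a := ENNReal.toReal_nonneg
  have hK : (1:ℝ) ≤ (2 + μ) / Real.sqrt (2 * μ) := by
    rw [le_div_iff₀ (by rw [hs]; positivity), one_mul, hs]
    nlinarith
  have hX : 0 ≤ Real.exp (-c / 2) * Q a := mul_nonneg (Real.exp_pos _).le hQ0
  calc Q ((c + μ) / Real.sqrt (2 * μ)) ≤ Real.exp (-c / 2) * Q a := h1
    _ = 1 * (Real.exp (-c / 2) * Q a) := by ring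
    _ ≤ (2 + μ) / Real.sqrt (2 * μ) * (Real.exp (-c / 2) * Q a) :=
        mul_le_mul_of_nonneg_right hK hX
    _ = (2 + μ) / Real.sqrt (2 * μ) * Real.exp (-c / 2) * Q a := by ring
end

section
/- Let σ > 0. Let (l⁺, l⁻) be a pair of real random variables with P(|l⁺| = |l⁻|) = 0, and let n⁺, n⁻ be i.i.d. random variables with distribution N(0, σ²), with the pair (n⁺, n⁻) independent of (l⁺, l⁻). Then the random variable Z = sgn(l⁻)·1{|l⁺| ≤ |l⁻|}·n⁺ + sgn(l⁺)·1{|l⁻| ≤ |l⁺|}·n⁻ has distribution N(0, σ²). -/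
open MeasureTheory ProbabilityTheory Real

lemma measurable_realSign : Measurable Real.sign := by
  unfold Real.sign
  exact Measurable.ite (measurableSet_lt measurable_id measurable_const) measurable_const
    (Measurable.ite (measurableSet_lt measurable_const measurable_id) measurable_const
      measurable_const)

lemma gaussianReal_map_neg' (v : NNReal) :
    (gaussianReal 0 v).map (fun x : ℝ => -x) = gaussianReal 0 v := by
  have h := gaussianReal_map_const_mul (μ := 0) (v := v) (-1)
  have h1 : (fun x : ℝ => (-1 : ℝ) * x) = fun x : ℝ => -x := by funext x; ring
  have h2 : (⟨(-1 : ℝ) ^ 2, sq_nonneg _⟩ : NNReal) = 1 := by ext; norm_num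
  rw [← h1]
  convert h using 2 <;> simp [NNReal.eq_iff]

/-- Proposition 1 (f-operation step): the combined perturbation noise after an
f-operation is again Gaussian with the same variance. -/
theorem f_operation_perturbation_gaussian
    {Ω : Type*} [MeasureSpace Ω] [IsProbabilityMeasure (ℙ : Measure Ω)]
    (σ : ℝ) (hσ : 0 < σ)
    (lp lm np nm : Ω → ℝ)
    (hlp : Measurable lp) (hlm : Measurable lm)
    (hnp : Measurable np) (hnm : Measurable nm)
    (htie : ℙ {ω | |lp ω| = |lm ω|} = 0)
    (hnpdist : Measure.map np ℙ = gaussianReal 0 (σ ^ 2).toNNReal)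
    (hnmdist : Measure.map nm ℙ = gaussianReal 0 (σ ^ 2).toNNReal)
    (hnn : IndepFun np nm ℙ)
    (hindep : IndepFun (fun ω => (np ω, nm ω)) (fun ω => (lp ω, lm ω)) ℙ) :
    Measure.map (fun ω =>
        Real.sign (lm ω) * (if |lp ω| ≤ |lm ω| then (1 : ℝ) else 0) * np ω +
        Real.sign (lp ω) * (if |lm ω| ≤ |lp ω| then (1 : ℝ) else 0) * nm ω) ℙ =
      gaussianReal 0 (σ ^ 2).toNNReal := by
  set v := (σ ^ 2).toNNReal with hvdef
  set μ := gaussianReal 0 v with hμdef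
  set Z : Ω → ℝ := fun ω =>
      Real.sign (lm ω) * (if |lp ω| ≤ |lm ω| then (1 : ℝ) else 0) * np ω +
      Real.sign (lp ω) * (if |lm ω| ≤ |lp ω| then (1 : ℝ) else 0) * nm ω with hZdef
  have hZ : Measurable Z := by
    apply Measurable.add
    · exact (((measurable_realSign.comp hlm).mul
        (Measurable.ite (measurableSet_le hlp.abs hlm.abs) measurable_const
          measurable_const)).mul hnp)
    · exact (((measurable_realSign.comp hlp).mul
        (Measurable.ite (measurableSet_le hlm.abs hlp.abs) measurable_const
          measurable_const)).mul hnm)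
  set L : Ω → ℝ × ℝ := fun ω => (lp ω, lm ω) with hLdef
  have hL : Measurable L := hlp.prodMk hlm
  -- the four events as preimages under L
  set sAp : Set (ℝ × ℝ) := {p | |p.1| < |p.2| ∧ 0 < p.2} with hsApdef
  set sAm : Set (ℝ × ℝ) := {p | |p.1| < |p.2| ∧ p.2 < 0} with hsAmdef
  set sBp : Set (ℝ × ℝ) := {p | |p.2| < |p.1| ∧ 0 < p.1} with hsBpdef
  set sBm : Set (ℝ × ℝ) := {p | |p.2| < |p.1| ∧ p.1 < 0} with hsBmdef
  have habs1 : Measurable fun p : ℝ × ℝ => |p.1| := measurable_fst.abs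
  have habs2 : Measurable fun p : ℝ × ℝ => |p.2| := measurable_snd.abs
  have hmAp : MeasurableSet sAp :=
    (measurableSet_lt habs1 habs2).inter (measurableSet_lt measurable_const measurable_snd)
  have hmAm : MeasurableSet sAm :=
    (measurableSet_lt habs1 habs2).inter (measurableSet_lt measurable_snd measurable_const)
  have hmBp : MeasurableSet sBp :=
    (measurableSet_lt habs2 habs1).inter (measurableSet_lt measurable_const measurable_fst)
  have hmBm : MeasurableSet sBm :=
    (measurableSet_lt habs2 habs1).inter (measurableSet_lt measurable_fst measurable_const)
  set Ap : Set Ω := L ⁻¹' sAp with hApdef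
  set Am : Set Ω := L ⁻¹' sAm with hAmdef
  set Bp : Set Ω := L ⁻¹' sBp with hBpdef
  set Bm : Set Ω := L ⁻¹' sBm with hBmdef
  have hApm : MeasurableSet Ap := hL hmAp
  have hAmm : MeasurableSet Am := hL hmAm
  have hBpm : MeasurableSet Bp := hL hmBp
  have hBmm : MeasurableSet Bm := hL hmBm
  -- membership characterizations
  have hApc : ∀ ω, ω ∈ Ap ↔ |lp ω| < |lm ω| ∧ 0 < lm ω := fun ω => Iff.rfl
  have hAmc : ∀ ω, ω ∈ Am ↔ |lp ω| < |lm ω| ∧ lm ω < 0 := fun ω => Iff.rfl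
  have hBpc : ∀ ω, ω ∈ Bp ↔ |lm ω| < |lp ω| ∧ 0 < lp ω := fun ω => Iff.rfl
  have hBmc : ∀ ω, ω ∈ Bm ↔ |lm ω| < |lp ω| ∧ lp ω < 0 := fun ω => Iff.rfl
  -- pairwise disjointness
  have dApAm : Disjoint Ap Am := by
    rw [Set.disjoint_left]; intro ω h1 h2
    exact absurd ((hApc ω).mp h1).2 (not_lt.mpr ((hAmc ω).mp h2).2.le)
  have dApBp : Disjoint Ap Bp := by
    rw [Set.disjoint_left]; intro ω h1 h2
    exact absurd ((hApc ω).mp h1).1 (not_lt.mpr ((hBpc ω).mp h2).1.le)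
  have dApBm : Disjoint Ap Bm := by
    rw [Set.disjoint_left]; intro ω h1 h2
    exact absurd ((hApc ω).mp h1).1 (not_lt.mpr ((hBmc ω).mp h2).1.le)
  have dAmBp : Disjoint Am Bp := by
    rw [Set.disjoint_left]; intro ω h1 h2
    exact absurd ((hAmc ω).mp h1).1 (not_lt.mpr ((hBpc ω).mp h2).1.le)
  have dAmBm : Disjoint Am Bm := by
    rw [Set.disjoint_left]; intro ω h1 h2
    exact absurd ((hAmc ω).mp h1).1 (not_lt.mpr ((hBmc ω).mp h2).1.le)
  have dBpBm : Disjoint Bp Bm := by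
    rw [Set.disjoint_left]; intro ω h1 h2
    exact absurd ((hBpc ω).mp h1).2 (not_lt.mpr ((hBmc ω).mp h2).2.le)
  -- decomposition of an arbitrary set modulo the null tie set
  have decomp : ∀ E : Set Ω, MeasurableSet E →
      ℙ E = ℙ (E ∩ Ap) + ℙ (E ∩ Am) + ℙ (E ∩ Bp) + ℙ (E ∩ Bm) := by
    intro E hEm
    have hsub : E \ {ω | |lp ω| = |lm ω|}
        = ((E ∩ Ap ∪ E ∩ Am) ∪ E ∩ Bp) ∪ E ∩ Bm := by
      ext ω
      simp only [Set.mem_diff, Set.mem_setOf_eq, Set.mem_union, Set.mem_inter_iff,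
        hApc, hAmc, hBpc, hBmc]
      constructor
      · rintro ⟨hE, hne⟩
        rcases lt_trichotomy (|lp ω|) (|lm ω|) with h | h | h
        · have hlm0 : lm ω ≠ 0 := by
            intro h0; rw [h0] at h; simp at h; exact absurd h (not_lt.mpr (abs_nonneg _))
          rcases hlm0.lt_or_gt with h0 | h0
          · exact Or.inl (Or.inl (Or.inr ⟨hE, h, h0⟩))
          · exact Or.inl (Or.inl (Or.inl ⟨hE, h, h0⟩))
        · exact absurd h hne
        · have hlp0 : lp ω ≠ 0 := by
            intro h0; rw [h0] at h; simp at h; exact absurd h (not_lt.mpr (abs_nonneg _))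
          rcases hlp0.lt_or_gt with h0 | h0
          · exact Or.inr ⟨hE, h, h0⟩
          · exact Or.inl (Or.inr ⟨hE, h, h0⟩)
      · rintro (((⟨hE, h, _⟩ | ⟨hE, h, _⟩) | ⟨hE, h, _⟩) | ⟨hE, h, _⟩)
        · exact ⟨hE, h.ne⟩
        · exact ⟨hE, h.ne⟩
        · exact ⟨hE, h.ne'⟩
        · exact ⟨hE, h.ne'⟩
    have h1 : ℙ E = ℙ (E \ {ω | |lp ω| = |lm ω|}) := (measure_diff_null htie).symm
    rw [h1, hsub,
      measure_union (((dApBm.mono Set.inter_subset_right Set.inter_subset_right).union_left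
        (dAmBm.mono Set.inter_subset_right Set.inter_subset_right)).union_left
          (dBpBm.mono Set.inter_subset_right Set.inter_subset_right)) (hEm.inter hBmm),
      measure_union ((dApBp.mono Set.inter_subset_right Set.inter_subset_right).union_left
        (dAmBp.mono Set.inter_subset_right Set.inter_subset_right)) (hEm.inter hBpm),
      measure_union (dApAm.mono Set.inter_subset_right Set.inter_subset_right)
        (hEm.inter hAmm)]
  -- independence of the noises (and their negations) with L
  have hnpL : IndepFun np L ℙ := hindep.comp measurable_fst measurable_id
  have hnmL : IndepFun nm L ℙ := hindep.comp measurable_snd measurable_id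
  have hnegnpL : IndepFun (fun ω => -np ω) L ℙ := hindep.comp measurable_fst.neg measurable_id
  have hnegnmL : IndepFun (fun ω => -nm ω) L ℙ := hindep.comp measurable_snd.neg measurable_id
  -- distributions
  have hnegnp : Measure.map (fun ω => -np ω) ℙ = μ := by
    have h : (fun ω => -np ω) = (fun x : ℝ => -x) ∘ np := rfl
    rw [h, ← Measure.map_map measurable_neg hnp, hnpdist, hμdef, gaussianReal_map_neg']
  have hnegnm : Measure.map (fun ω => -nm ω) ℙ = μ := by
    have h : (fun ω => -nm ω) = (fun x : ℝ => -x) ∘ nm := rfl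
    rw [h, ← Measure.map_map measurable_neg hnm, hnmdist, hμdef, gaussianReal_map_neg']
  -- total mass of the four events
  have htot : ℙ Ap + ℙ Am + ℙ Bp + ℙ Bm = 1 := by
    have := decomp Set.univ MeasurableSet.univ
    simp only [Set.univ_inter, measure_univ] at this
    exact this.symm
  -- main computation
  ext s hs
  rw [Measure.map_apply hZ hs, decomp _ (hZ hs)]
  have eAp : Z ⁻¹' s ∩ Ap = np ⁻¹' s ∩ Ap := by
    ext ω
    simp only [Set.mem_inter_iff, Set.mem_preimage]
    refine and_congr_left fun h2 => ?_
    have h2' := (hApc ω).mp h2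
    have hz : Z ω = np ω := by
      simp only [hZdef]
      rw [if_pos h2'.1.le, if_neg (not_le.mpr h2'.1), Real.sign_of_pos h2'.2]
      ring
    rw [hz]
  have eAm : Z ⁻¹' s ∩ Am = (fun ω => -np ω) ⁻¹' s ∩ Am := by
    ext ω
    simp only [Set.mem_inter_iff, Set.mem_preimage]
    refine and_congr_left fun h2 => ?_
    have h2' := (hAmc ω).mp h2
    have hz : Z ω = -np ω := by
      simp only [hZdef]
      rw [if_pos h2'.1.le, if_neg (not_le.mpr h2'.1), Real.sign_of_neg h2'.2]
      ring
    rw [hz]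
  have eBp : Z ⁻¹' s ∩ Bp = nm ⁻¹' s ∩ Bp := by
    ext ω
    simp only [Set.mem_inter_iff, Set.mem_preimage]
    refine and_congr_left fun h2 => ?_
    have h2' := (hBpc ω).mp h2
    have hz : Z ω = nm ω := by
      simp only [hZdef]
      rw [if_pos h2'.1.le, if_neg (not_le.mpr h2'.1), Real.sign_of_pos h2'.2]
      ring
    rw [hz]
  have eBm : Z ⁻¹' s ∩ Bm = (fun ω => -nm ω) ⁻¹' s ∩ Bm := by
    ext ω
    simp only [Set.mem_inter_iff, Set.mem_preimage]
    refine and_congr_left fun h2 => ?_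
    have h2' := (hBmc ω).mp h2
    have hz : Z ω = -nm ω := by
      simp only [hZdef]
      rw [if_pos h2'.1.le, if_neg (not_le.mpr h2'.1), Real.sign_of_neg h2'.2]
      ring
    rw [hz]
  rw [eAp, eAm, eBp, eBm]
  rw [hnpL.measure_inter_preimage_eq_mul s sAp hs hmAp,
    hnegnpL.measure_inter_preimage_eq_mul s sAm hs hmAm,
    hnmL.measure_inter_preimage_eq_mul s sBp hs hmBp,
    hnegnmL.measure_inter_preimage_eq_mul s sBm hs hmBm,
    ← Measure.map_apply hnp hs, ← Measure.map_apply (f := fun ω => -np ω) (hnp.neg) hs,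
    ← Measure.map_apply hnm hs, ← Measure.map_apply (f := fun ω => -nm ω) (hnm.neg) hs,
    hnpdist, hnmdist, hnegnp, hnegnm]
  calc μ s * ℙ Ap + μ s * ℙ Am + μ s * ℙ Bp + μ s * ℙ Bm
      = μ s * (ℙ Ap + ℙ Am + ℙ Bp + ℙ Bm) := by ring
    _ = μ s := by rw [htot, mul_one]
end

section
/- Let z₀ ∈ (0, 1) and let 0 < γ < β. There exists n₀ ∈ ℕ such that for all n ≥ n₀ the following holds: for every b : {0, …, n−1} → {0, 1} and every sequence z : {0, …, n} → ℝ with initial value z₀ satisfying z_{j+1} = z_j² whenever b_j = 1 and z_{j+1} ≥ z_j whenever b_j = 0, if z_n < 2^{−(2^n)^β} then #{ j < n : b_j = 1 } ≥ n·γ. -/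
open Finset

/-- Combinatorial core of Proposition 2: if the Bhattacharyya parameter of a
bit-channel of a length-`2^n` polar code is below `2 ^ (-(2^n)^β)`, then the
number of g-operations (squaring steps) along its polarization path is at least
`n * γ`, for any `γ < β` and sufficiently large `n`. -/
theorem g_operation_count_lower_bound
    (z0 γ β : ℝ) (hz0 : 0 < z0) (hz1 : z0 < 1) (hγ : 0 < γ) (hγβ : γ < β) :
    ∃ n0 : ℕ, ∀ n : ℕ, n0 ≤ n →
      ∀ (b : ℕ → Bool) (z : ℕ → ℝ), z 0 = z0 →
        (∀ j < n, b j = true → z (j + 1) = (z j) ^ 2) →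
        (∀ j < n, b j = false → z j ≤ z (j + 1)) →
        z n < (2 : ℝ) ^ (-(((2 : ℝ) ^ n) ^ β)) →
        (n : ℝ) * γ ≤ (((Finset.range n).filter (fun j => b j = true)).card : ℝ) := by
  have hlog2 : (0:ℝ) < Real.log 2 := Real.log_pos (by norm_num)
  set lam := -Real.log z0 with hlam
  have hlam0 : 0 < lam := by
    have := Real.log_neg hz0 hz1
    simp only [hlam]; linarith
  set C := Real.log (Real.log 2 / lam) / Real.log 2 with hC
  refine ⟨⌈(-C) / (β - γ)⌉₊, ?_⟩
  intro n hn b z hzini hsq hmono hzn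
  have key : ∀ j ≤ n, 0 < z j ∧
      z0 ^ (2 ^ (((range j).filter (fun i => b i = true)).card)) ≤ z j := by
    intro j
    induction j with
    | zero => intro _; simp [hzini, hz0, hz0.le]
    | succ j ih =>
      intro hj
      obtain ⟨hpos, hle⟩ := ih (Nat.le_of_succ_le hj)
      have hjn : j < n := hj
      by_cases hb : b j = true
      · have hcard : ((range (j+1)).filter (fun i => b i = true)).card
            = ((range j).filter (fun i => b i = true)).card + 1 := by
          rw [Finset.range_add_one, Finset.filter_insert, if_pos hb,
              Finset.card_insert_of_notMem (by simp)]
        have hz' := hsq j hjn hb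
        constructor
        · rw [hz']; positivity
        · rw [hz', hcard, pow_succ, pow_mul]
          exact pow_le_pow_left₀ (by positivity) hle 2
      · have hb' : b j = false := by simpa using hb
        have hcard : ((range (j+1)).filter (fun i => b i = true)).card
            = ((range j).filter (fun i => b i = true)).card := by
          rw [Finset.range_add_one, Finset.filter_insert, if_neg hb]
        have hz' := hmono j hjn hb'
        exact ⟨lt_of_lt_of_le hpos hz', hcard ▸ le_trans hle hz'⟩
  obtain ⟨hpos, hle⟩ := key n le_rfl
  set k := ((range n).filter (fun j => b j = true)).card with hk
  set X := (((2:ℝ)^n)^β) with hX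
  have hXpos : (0:ℝ) < X := by positivity
  have h1 : z0 ^ (2 ^ k) < (2:ℝ) ^ (-X) := lt_of_le_of_lt hle hzn
  have hlogz0 : Real.log (z0 ^ (2^k)) = ((2^k : ℕ) : ℝ) * Real.log z0 := by
    rw [Real.log_pow]
  have hlogr : Real.log ((2:ℝ) ^ (-X)) = -X * Real.log 2 := by
    rw [Real.log_rpow (by norm_num)]
  have h2 : ((2^k : ℕ) : ℝ) * Real.log z0 < -X * Real.log 2 := by
    rw [← hlogz0, ← hlogr]
    exact Real.log_lt_log (by positivity) h1
  have h2' : ((2:ℝ)^k) = ((2^k : ℕ) : ℝ) := by push_cast; ring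
  have h3 : X * Real.log 2 / lam < (2:ℝ)^k := by
    rw [div_lt_iff₀ hlam0, h2']
    nlinarith [h2]
  have hq : X * Real.log 2 / lam = X * (Real.log 2 / lam) := by ring
  have hqpos : 0 < Real.log 2 / lam := by positivity
  have h4 : Real.log (X * Real.log 2 / lam) < Real.log ((2:ℝ)^k) := by
    apply Real.log_lt_log (by positivity) h3
  have hlogX : Real.log X = (n : ℝ) * β * Real.log 2 := by
    rw [hX, Real.log_rpow (by positivity), Real.log_pow]
    ring
  have h5 : Real.log (X * Real.log 2 / lam)
      = (n : ℝ) * β * Real.log 2 + Real.log (Real.log 2 / lam) := by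
    rw [hq, Real.log_mul (ne_of_gt hXpos) (ne_of_gt hqpos), hlogX]
  have h6 : Real.log ((2:ℝ)^k) = (k : ℝ) * Real.log 2 := by
    rw [Real.log_pow]
  have h7 : (n : ℝ) * β + C < (k : ℝ) := by
    rw [h5, h6] at h4
    have := (div_lt_div_iff_of_pos_right hlog2).mpr h4
    rw [add_div, mul_div_assoc, div_self (ne_of_gt hlog2), mul_one,
        mul_div_assoc, div_self (ne_of_gt hlog2), mul_one] at this
    exact this
  have hn' : -C ≤ (n : ℝ) * (β - γ) := by
    have h := Nat.ceil_le.mp hn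
    have hβγ : 0 < β - γ := by linarith
    calc -C = (-C / (β - γ)) * (β - γ) := by field_simp
    _ ≤ (n : ℝ) * (β - γ) := by
        apply mul_le_mul_of_nonneg_right h hβγ.le
  nlinarith [h7, hn']
end

section
/- Let β ∈ (1/3, 1/2) and α ∈ (1 − 2β, β). There exists N₀ such that for all real N ≥ N₀ and all μ, σ with μ ≥ N^β and 0 ≤ σ² ≤ N^{1−α}: if L and n are independent real random variables with L ~ N(μ, 2μ) and n ~ N(0, σ²), then P(L + n > 0) ≥ 1 − 2^{ − N^{α + 2β − 1} / 6 }. -/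
open MeasureTheory ProbabilityTheory Real

open scoped NNReal ENNReal

lemma pdf_mul_exp (m : ℝ) {v : ℝ≥0} (hv : v ≠ 0) (t x : ℝ) :
    gaussianPDFReal m v x * rexp (t * x) =
      rexp (m * t + v * t ^ 2 / 2) * gaussianPDFReal (m + t * v) v x := by
  have hv' : (v : ℝ) ≠ 0 := by exact_mod_cast hv
  simp only [gaussianPDFReal]
  rw [mul_assoc, ← Real.exp_add, mul_left_comm, ← Real.exp_add]
  congr 1
  field_simp
  ring

lemma exp_mul_gaussian (m : ℝ) (v : ℝ≥0) (t : ℝ) :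
    Integrable (fun x ↦ rexp (t * x)) (gaussianReal m v) ∧
      ∫ x, rexp (t * x) ∂(gaussianReal m v) = rexp (m * t + v * t ^ 2 / 2) := by
  by_cases hv : v = 0
  · subst hv
    rw [gaussianReal_zero_var]
    have hae : (fun x : ℝ ↦ rexp (t * x)) =ᵐ[Measure.dirac m] fun _ ↦ rexp (t * m) := by
      rw [MeasureTheory.ae_dirac_eq]
      exact Filter.eventually_pure.2 rfl
    constructor
    · exact (integrable_const _).congr hae.symm
    · rw [integral_dirac]
      norm_num [mul_comm]
  · rw [gaussianReal_of_var_ne_zero _ hv]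
    have hmeas : Measurable fun x ↦ (gaussianPDFReal m v x).toNNReal :=
      (measurable_gaussianPDFReal m v).real_toNNReal
    have hd : gaussianPDF m v = fun x ↦ ((gaussianPDFReal m v x).toNNReal : ℝ≥0∞) := rfl
    have hsmul : ∀ x : ℝ, (gaussianPDFReal m v x).toNNReal • rexp (t * x)
        = rexp (m * t + v * t ^ 2 / 2) * gaussianPDFReal (m + t * v) v x := by
      intro x
      rw [NNReal.smul_def, smul_eq_mul, Real.coe_toNNReal _ (gaussianPDFReal_nonneg m v x),
        pdf_mul_exp m hv t x]
    have hint : Integrable (fun x ↦ rexp (m * t + v * t ^ 2 / 2) * gaussianPDFReal (m + t * v) v x)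
        (volume : Measure ℝ) := (integrable_gaussianPDFReal _ _).const_mul _
    constructor
    · rw [hd, integrable_withDensity_iff_integrable_smul hmeas]
      simpa only [hsmul] using hint
    · rw [hd, integral_withDensity_eq_integral_smul hmeas]
      simp only [hsmul]
      rw [integral_const_mul, integral_gaussianPDFReal_eq_one _ hv, mul_one]

lemma mgf_of_map {Ω : Type} [MeasureSpace Ω] {X : Ω → ℝ} (hX : Measurable X)
    {m : ℝ} {v : ℝ≥0} (hmap : Measure.map X ℙ = gaussianReal m v) (t : ℝ) :
    Integrable (fun ω ↦ rexp (t * X ω)) ℙ ∧ mgf X ℙ t = rexp (m * t + v * t ^ 2 / 2) := by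
  have hf : Measurable fun x : ℝ ↦ rexp (t * x) := by fun_prop
  constructor
  · have h := (exp_mul_gaussian m v t).1
    rw [← hmap] at h
    exact (integrable_map_measure hf.aestronglyMeasurable hX.aemeasurable).mp h
  · have h := (exp_mul_gaussian m v t).2
    rw [← hmap, integral_map hX.aemeasurable hf.aestronglyMeasurable] at h
    exact h

set_option maxHeartbeats 1000000 in
/-- Quantitative bound in the proof of Lemma 2: for information-set bit-channels
with decision-LLR mean `μ ≥ N^β` and accumulated perturbation variance
`σ² ≤ N^(1-α)`, the perturbed decision is correct except with probability at
most `2 ^ (-N^(α+2β-1)/6)`, for all sufficiently large `N`. -/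
theorem lemma2_quantitative_bound
    (β α : ℝ) (hβ1 : 1 / 3 < β) (hβ2 : β < 1 / 2)
    (hα1 : 1 - 2 * β < α) (hα2 : α < β) :
    ∃ N0 : ℝ, ∀ N : ℝ, N0 ≤ N → ∀ μ σ : ℝ,
      N ^ β ≤ μ → σ ^ 2 ≤ N ^ (1 - α) →
      ∀ (Ω : Type) (_ : MeasureSpace Ω), IsProbabilityMeasure (ℙ : Measure Ω) →
        ∀ L n : Ω → ℝ, Measurable L → Measurable n →
          Measure.map L ℙ = gaussianReal μ (2 * μ).toNNReal →
          Measure.map n ℙ = gaussianReal 0 (σ ^ 2).toNNReal →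
          IndepFun L n ℙ →
          1 - (2 : ℝ) ^ (-(N ^ (α + 2 * β - 1)) / 6) ≤
            (ℙ {ω | 0 < L ω + n ω}).toReal := by
  refine ⟨1, fun N hN μ σ hμN hσN Ω _ hprob L n hL hn hmapL hmapn hind ↦ ?_⟩
  haveI := hprob
  have hN0 : (0 : ℝ) < N := lt_of_lt_of_le one_pos hN
  set a : ℝ := α + 2 * β - 1 with ha_def
  set b : ℝ := N ^ β with hb_def
  set c : ℝ := N ^ (1 - α) with hc_def
  have hb_pos : 0 < b := rpow_pos_of_pos hN0 _
  have hc_pos : 0 < c := rpow_pos_of_pos hN0 _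
  have hμ_pos : 0 < μ := lt_of_lt_of_le hb_pos hμN
  have hσ2 : (0 : ℝ) ≤ σ ^ 2 := sq_nonneg σ
  have hv_pos : 0 < 2 * μ + σ ^ 2 := by linarith
  set s : ℝ := μ / (2 * μ + σ ^ 2) with hs_def
  have hs_pos : 0 < s := div_pos hμ_pos hv_pos
  -- mgf and integrability facts
  have hcoeL : (((2 * μ).toNNReal : ℝ≥0) : ℝ) = 2 * μ := Real.coe_toNNReal _ (by positivity)
  have hcoen : (((σ ^ 2).toNNReal : ℝ≥0) : ℝ) = σ ^ 2 := Real.coe_toNNReal _ hσ2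
  obtain ⟨hLint, hLmgf⟩ := mgf_of_map hL hmapL (-s)
  obtain ⟨hnint, hnmgf⟩ := mgf_of_map hn hmapn (-s)
  rw [hcoeL] at hLmgf
  rw [hcoen] at hnmgf
  -- Chernoff bound
  have hms : MeasurableSet {ω | L ω + n ω ≤ 0} :=
    measurableSet_le (hL.add hn) measurable_const
  have hch := measure_le_le_exp_mul_mgf (X := L + n) (μ := ℙ) 0 (neg_nonpos_of_nonneg hs_pos.le)
    (hind.integrable_exp_mul_add hLint hnint)
  rw [hind.mgf_add' hL.aestronglyMeasurable hn.aestronglyMeasurable, hLmgf, hnmgf] at hch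
  have hchern : (ℙ {ω | L ω + n ω ≤ 0}).toReal ≤ rexp (-(μ ^ 2 / (2 * (2 * μ + σ ^ 2)))) := by
    refine le_trans (le_of_eq ?_) (hch.trans (le_of_eq ?_))
    · rfl
    · rw [← Real.exp_add, ← Real.exp_add]
      congr 1
      have hv_ne : (2 * μ + σ ^ 2) ≠ 0 := ne_of_gt hv_pos
      rw [hs_def]
      field_simp
      ring
  -- the exponent bound
  have hbc : b ≤ c := rpow_le_rpow_of_exponent_le hN (by linarith)
  have hkey : N ^ a * c = b ^ 2 := by
    rw [hb_def, hc_def, ← Real.rpow_add hN0, ← Real.rpow_natCast (N ^ β) 2,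
      ← Real.rpow_mul hN0.le]
    norm_num
    ring_nf
    congr 1
    rw [ha_def]
    ring
  have hNa_nonneg : (0 : ℝ) ≤ N ^ a := (rpow_pos_of_pos hN0 _).le
  have h1 : N ^ a ≤ b := by
    rw [← mul_le_mul_iff_of_pos_right hc_pos, hkey]
    nlinarith
  have h2 : N ^ a * σ ^ 2 ≤ b ^ 2 := by
    calc N ^ a * σ ^ 2 ≤ N ^ a * c := by
          exact mul_le_mul_of_nonneg_left hσN hNa_nonneg
      _ = b ^ 2 := hkey
  have hexp_bound : N ^ a / 6 ≤ μ ^ 2 / (2 * (2 * μ + σ ^ 2)) := by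
    rw [div_le_div_iff₀ (by norm_num) (by positivity)]
    nlinarith [mul_le_mul_of_nonneg_right h1 hμ_pos.le,
      mul_le_mul hμN hμN hb_pos.le hμ_pos.le]
  have hlog2 : Real.log 2 ≤ 1 := by
    have := Real.log_le_sub_one_of_pos (by norm_num : (0:ℝ) < 2)
    linarith
  have hfinal : rexp (-(μ ^ 2 / (2 * (2 * μ + σ ^ 2)))) ≤ (2 : ℝ) ^ (-(N ^ a) / 6) := by
    rw [Real.rpow_def_of_pos (by norm_num : (0:ℝ) < 2)]
    apply Real.exp_le_exp.mpr
    have hlog2' : (0:ℝ) ≤ Real.log 2 := Real.log_nonneg (by norm_num)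
    nlinarith
  -- complement accounting
  have hset : {ω | 0 < L ω + n ω} = {ω | L ω + n ω ≤ 0}ᶜ := by
    ext ω; simp [not_le]
  rw [hset, prob_compl_eq_one_sub hms,
    ENNReal.toReal_sub_of_le prob_le_one ENNReal.one_ne_top, ENNReal.toReal_one]
  have := hchern.trans hfinal
  linarith
end

section
/- Let σ > 0, δ > 0 and s ∈ (0, 1/2). There exists N₀ such that for all real N ≥ N₀ and all μ, σ_L with 1/2 ≤ μ ≤ 2N/σ² and σ_L ≥ N^{δ/2}: if L and n are independent real random variables with L ~ N(μ, 2μ) and n ~ N(0, σ_L²), then P(L < 0 and L + n < 0) ≤ [ 1/2 + s + (2N/σ²) · exp(−√(π/2) · N^{δ/2} · s) ] · P(L < 0). -/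
open MeasureTheory ProbabilityTheory Real Set

/-- A centered Gaussian puts mass 1/2 on the negative reals. -/
lemma gauss_half_s10 {v : NNReal} (hv : v ≠ 0) :
    (gaussianReal 0 v (Iio 0)).toReal = 1 / 2 := by
  set ν := gaussianReal 0 v with hν
  have hone : (⟨(-1:ℝ)^2, sq_nonneg _⟩ : NNReal) = 1 := by
    refine NNReal.coe_injective ?_
    norm_num
    rfl
  have hmap : ν.map (fun x => (-1 : ℝ) * x) = ν := by
    rw [hν, gaussianReal_map_const_mul]
    congr 1
    · simp
    · ext; simp
  have hpre : (fun x : ℝ => (-1 : ℝ) * x) ⁻¹' (Iio 0) = Ioi 0 := by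
    ext x; simp
  have hsym : ν (Iio 0) = ν (Ioi 0) := by
    conv_lhs => rw [← hmap]
    rw [Measure.map_apply (by fun_prop) measurableSet_Iio, hpre]
  have hzero : ν {0} = 0 :=
    gaussianReal_absolutelyContinuous 0 hv (measure_singleton 0)
  have hIci : ν (Ici 0) = ν (Ioi 0) := by
    have : (Ici (0:ℝ)) = {0} ∪ Ioi 0 := by
      ext x; simp [le_iff_lt_or_eq, or_comm, eq_comm]
    rw [this, measure_union (by simp) measurableSet_Ioi, hzero, zero_add]
  have htot : ν (Iio 0) + ν (Ici 0) = 1 := by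
    rw [← measure_univ (μ := ν)]
    rw [← measure_union (by simp [disjoint_left]) measurableSet_Ici, Iio_union_Ici]
  rw [hIci, ← hsym] at htot
  have h1 : (ν (Iio 0)).toReal + (ν (Iio 0)).toReal = 1 := by
    rw [← ENNReal.toReal_add (measure_ne_top _ _) (measure_ne_top _ _), htot, ENNReal.toReal_one]
  linarith

/-- Small-window bound: P(n < a) ≤ 1/2 + a/(σL √(2π)) for n ~ N(0, σL²). -/
lemma gauss_Iio_bound {σL a : ℝ} (hσL : 0 < σL) (ha : 0 ≤ a) :
    (gaussianReal 0 (σL ^ 2).toNNReal (Iio a)).toReal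
      ≤ 1 / 2 + a * (σL * Real.sqrt (2 * π))⁻¹ := by
  set v := (σL ^ 2).toNNReal with hvdef
  have hvr : (v : ℝ) = σL ^ 2 := Real.coe_toNNReal _ (by positivity)
  have hv : v ≠ 0 := by
    intro h
    rw [h] at hvr
    simp at hvr
    nlinarith
  set ν := gaussianReal 0 v with hν
  have hsplit : Iio a = Iio 0 ∪ Ico 0 a := by
    ext x
    simp only [mem_Iio, mem_union, mem_Ico]
    constructor
    · intro h
      rcases lt_or_ge x 0 with h' | h'
      · exact Or.inl h'
      · exact Or.inr ⟨h', h⟩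
    · rintro (h | ⟨h1, h2⟩)
      · linarith
      · exact h2
  have hC : Real.sqrt (2 * π * v) = σL * Real.sqrt (2 * π) := by
    rw [hvr, show 2 * π * σL ^ 2 = σL ^ 2 * (2 * π) by ring,
      Real.sqrt_mul (by positivity), Real.sqrt_sq hσL.le, mul_comm]
  have hpdf : ∀ x, gaussianPDFReal 0 v x ≤ (σL * Real.sqrt (2 * π))⁻¹ := by
    intro x
    rw [gaussianPDFReal, hC]
    have h1 : Real.exp (-(x - 0) ^ 2 / (2 * v)) ≤ 1 := by
      rw [Real.exp_le_one_iff]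
      apply div_nonpos_of_nonpos_of_nonneg
      · simp [sq_nonneg]
      · rw [hvr]; positivity
    calc (σL * Real.sqrt (2 * π))⁻¹ * Real.exp (-(x - 0) ^ 2 / (2 * v))
        ≤ (σL * Real.sqrt (2 * π))⁻¹ * 1 := by
          apply mul_le_mul_of_nonneg_left h1 (by positivity)
      _ = (σL * Real.sqrt (2 * π))⁻¹ := mul_one _
  have hIco : (ν (Ico 0 a)).toReal ≤ a * (σL * Real.sqrt (2 * π))⁻¹ := by
    rw [hν, gaussianReal_apply_eq_integral 0 hv,
      ENNReal.toReal_ofReal (setIntegral_nonneg measurableSet_Ico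
        (fun x _ => gaussianPDFReal_nonneg _ _ _))]
    calc ∫ x in Ico 0 a, gaussianPDFReal 0 v x
        ≤ ∫ _x in Ico 0 a, (σL * Real.sqrt (2 * π))⁻¹ := by
          apply setIntegral_mono_on
          · exact (integrable_gaussianPDFReal _ _).integrableOn
          · exact integrableOn_const (by simp [Real.volume_Ico])
          · exact measurableSet_Ico
          · exact fun x _ => hpdf x
      _ = a * (σL * Real.sqrt (2 * π))⁻¹ := by
          rw [setIntegral_const, measureReal_def, Real.volume_Ico, smul_eq_mul, ENNReal.toReal_ofReal (by linarith)]
          ring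
  have hunion : (ν (Iio a)).toReal ≤ (ν (Iio 0)).toReal + (ν (Ico 0 a)).toReal := by
    rw [hsplit]
    refine le_trans (ENNReal.toReal_mono ?_ (measure_union_le _ _)) ?_
    · exact (ENNReal.add_lt_top.mpr ⟨measure_lt_top _ _, measure_lt_top _ _⟩).ne
    · rw [ENNReal.toReal_add (measure_ne_top _ _) (measure_ne_top _ _)]
  calc (ν (Iio a)).toReal ≤ (ν (Iio 0)).toReal + (ν (Ico 0 a)).toReal := hunion
    _ ≤ 1 / 2 + a * (σL * Real.sqrt (2 * π))⁻¹ := by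
        rw [gauss_half_s10 hv]; linarith

/-- Tail domination: for L ~ N(μ, 2μ), P(L ≤ -a) ≤ exp(-a/2) P(L < 0). -/
lemma gauss_tail_bound {μ a : ℝ} (hμ : 1 / 2 ≤ μ) (ha : 0 ≤ a) :
    (gaussianReal μ (2 * μ).toNNReal (Iic (-a))).toReal
      ≤ Real.exp (-a / 2) * (gaussianReal μ (2 * μ).toNNReal (Iio 0)).toReal := by
  set v := (2 * μ).toNNReal with hvdef
  have hvr : (v : ℝ) = 2 * μ := Real.coe_toNNReal _ (by linarith)
  have hv : v ≠ 0 := by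
    intro h; rw [h] at hvr; simp at hvr; linarith
  have hshift : gaussianReal μ v (Iic (-a)) = gaussianReal (μ + a) v (Iic 0) := by
    rw [← gaussianReal_map_add_const (μ := μ) (v := v) a,
      Measure.map_apply (by fun_prop) measurableSet_Iic]
    congr 1
    ext x
    simp only [mem_preimage, mem_Iic]
    constructor <;> intro <;> linarith
  have hpt : ∀ x ∈ Iic (0:ℝ), gaussianPDFReal (μ + a) v x
      ≤ Real.exp (-a / 2) * gaussianPDFReal μ v x := by
    intro x hx
    rw [mem_Iic] at hx
    rw [gaussianPDFReal, gaussianPDFReal]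
    rw [show Real.exp (-a / 2) * ((Real.sqrt (2 * π * v))⁻¹ * Real.exp (-(x - μ) ^ 2 / (2 * v)))
        = (Real.sqrt (2 * π * v))⁻¹ * (Real.exp (-a / 2) * Real.exp (-(x - μ) ^ 2 / (2 * v)))
      from by ring, ← Real.exp_add]
    apply mul_le_mul_of_nonneg_left _ (by positivity)
    rw [Real.exp_le_exp]
    rw [hvr]
    have hμ0 : 0 < μ := by linarith
    have key : -a / 2 + -(x - μ) ^ 2 / (2 * (2 * μ)) - (-(x - (μ + a)) ^ 2 / (2 * (2 * μ)))
        = (-2 * a * x + a ^ 2) / (4 * μ) := by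
      field_simp
      ring
    have hpos : (0:ℝ) ≤ (-2 * a * x + a ^ 2) / (4 * μ) := by
      apply div_nonneg _ (by linarith)
      nlinarith
    linarith [key ▸ hpos]
  have hnn1 : 0 ≤ ∫ x in Iic (0:ℝ), gaussianPDFReal (μ + a) v x :=
    setIntegral_nonneg measurableSet_Iic (fun x _ => gaussianPDFReal_nonneg _ _ _)
  have hnn2 : 0 ≤ ∫ x in Iio (0:ℝ), gaussianPDFReal μ v x :=
    setIntegral_nonneg measurableSet_Iio (fun x _ => gaussianPDFReal_nonneg _ _ _)
  rw [hshift, gaussianReal_apply_eq_integral _ hv, gaussianReal_apply_eq_integral _ hv,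
    ENNReal.toReal_ofReal hnn1, ENNReal.toReal_ofReal hnn2]
  calc ∫ x in Iic (0:ℝ), gaussianPDFReal (μ + a) v x
      ≤ ∫ x in Iic (0:ℝ), Real.exp (-a / 2) * gaussianPDFReal μ v x := by
        apply setIntegral_mono_on
        · exact (integrable_gaussianPDFReal _ _).integrableOn
        · exact ((integrable_gaussianPDFReal _ _).const_mul _).integrableOn
        · exact measurableSet_Iic
        · exact hpt
    _ = Real.exp (-a / 2) * ∫ x in Iic (0:ℝ), gaussianPDFReal μ v x := integral_const_mul _ _
    _ = Real.exp (-a / 2) * ∫ x in Iio (0:ℝ), gaussianPDFReal μ v x := by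
        rw [integral_Iic_eq_integral_Iio]

/-- Probabilistic content of Lemma 1: for an information bit of a length-`N`
polar code over a BI-AWGN channel with noise variance `σ²`, with decision-LLR
mean `1/2 ≤ μ ≤ 2N/σ²` and perturbation standard deviation `σL ≥ N^(δ/2)`, the
probability that the decision stays wrong after one perturbation is bounded. -/
theorem lemma1_unchanged_probability_bound
    (σ δ s : ℝ) (hσ : 0 < σ) (hδ : 0 < δ) (hs1 : 0 < s) (hs2 : s < 1 / 2) :
    ∃ N0 : ℝ, ∀ N : ℝ, N0 ≤ N → ∀ μ σL : ℝ,
      1 / 2 ≤ μ → μ ≤ 2 * N / σ ^ 2 → N ^ (δ / 2) ≤ σL →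
      ∀ (Ω : Type) (_ : MeasureSpace Ω), IsProbabilityMeasure (ℙ : Measure Ω) →
        ∀ L n : Ω → ℝ, Measurable L → Measurable n →
          Measure.map L ℙ = gaussianReal μ (2 * μ).toNNReal →
          Measure.map n ℙ = gaussianReal 0 (σL ^ 2).toNNReal →
          IndepFun L n ℙ →
          (ℙ {ω | L ω < 0 ∧ L ω + n ω < 0}).toReal ≤
            (1 / 2 + s +
                (2 * N / σ ^ 2) *
                  Real.exp (-(Real.sqrt (Real.pi / 2)) * N ^ (δ / 2) * s)) *
              (ℙ {ω | L ω < 0}).toReal := by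
  refine ⟨max 1 (σ ^ 2), fun N hN μ σL hμ hμN hσL Ω _ hprob L n hL hn hmapL hmapn hind => ?_⟩
  haveI := hprob
  have hN1 : (1:ℝ) ≤ N := le_trans (le_max_left _ _) hN
  have hNσ : σ ^ 2 ≤ N := le_trans (le_max_right _ _) hN
  have hr1 : (1:ℝ) ≤ N ^ (δ / 2) := Real.one_le_rpow hN1 (by positivity)
  have hσL1 : (1:ℝ) ≤ σL := le_trans hr1 hσL
  have hσL0 : (0:ℝ) < σL := by linarith
  set a := s * Real.sqrt (2 * π) * σL with hadef
  have hsqrtpos : 0 < Real.sqrt (2 * π) := Real.sqrt_pos.mpr (by positivity)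
  have ha : 0 ≤ a := by positivity
  -- events
  set A := L ⁻¹' Iio 0 with hA
  set B := n ⁻¹' Iio a with hB
  set C := L ⁻¹' Iic (-a) with hC
  have hsub : {ω | L ω < 0 ∧ L ω + n ω < 0} ⊆ (A ∩ B) ∪ C := by
    rintro ω ⟨h1, h2⟩
    rcases le_or_gt (L ω) (-a) with h3 | h3
    · exact Or.inr h3
    · refine Or.inl ⟨h1, ?_⟩
      simp only [hB, mem_preimage, mem_Iio]
      linarith
  -- probabilities via the laws
  have hPA : ℙ A = gaussianReal μ (2 * μ).toNNReal (Iio 0) := by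
    rw [hA, ← Measure.map_apply hL measurableSet_Iio, hmapL]
  have hPB : ℙ B = gaussianReal 0 (σL ^ 2).toNNReal (Iio a) := by
    rw [hB, ← Measure.map_apply hn measurableSet_Iio, hmapn]
  have hPC : ℙ C = gaussianReal μ (2 * μ).toNNReal (Iic (-a)) := by
    rw [hC, ← Measure.map_apply hL measurableSet_Iic, hmapL]
  have hAeq : {ω | L ω < 0} = A := rfl
  have hsplit : (ℙ {ω | L ω < 0 ∧ L ω + n ω < 0}).toReal
      ≤ (ℙ (A ∩ B)).toReal + (ℙ C).toReal := by
    refine le_trans (ENNReal.toReal_mono ?_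
      (le_trans (measure_mono hsub) (measure_union_le _ _))) ?_
    · exact (ENNReal.add_lt_top.mpr ⟨measure_lt_top _ _, measure_lt_top _ _⟩).ne
    · rw [ENNReal.toReal_add (measure_ne_top _ _) (measure_ne_top _ _)]
  have hindep : (ℙ (A ∩ B)).toReal = (ℙ A).toReal * (ℙ B).toReal := by
    rw [hA, hB, hind.measure_inter_preimage_eq_mul _ _ measurableSet_Iio measurableSet_Iio,
      ENNReal.toReal_mul]
  -- bound on P(B)
  have hBbound : (ℙ B).toReal ≤ 1 / 2 + s := by
    rw [hPB]
    refine le_trans (gauss_Iio_bound hσL0 ha) ?_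
    have : a * (σL * Real.sqrt (2 * π))⁻¹ = s := by
      rw [hadef]
      field_simp
    rw [this]
  -- bound on P(C)
  have hCbound : (ℙ C).toReal ≤ Real.exp (-a / 2) * (ℙ A).toReal := by
    rw [hPC, hPA]
    exact gauss_tail_bound hμ ha
  -- exp comparison
  have hsqhalf : Real.sqrt (2 * π) = 2 * Real.sqrt (π / 2) := by
    rw [show (2:ℝ) * π = 2 ^ 2 * (π / 2) by ring, Real.sqrt_mul (by positivity),
      Real.sqrt_sq (by norm_num : (0:ℝ) ≤ 2)]
  have hexp : Real.exp (-a / 2)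
      ≤ (2 * N / σ ^ 2) * Real.exp (-(Real.sqrt (π / 2)) * N ^ (δ / 2) * s) := by
    have h1 : Real.exp (-a / 2) ≤ Real.exp (-(Real.sqrt (π / 2)) * N ^ (δ / 2) * s) := by
      rw [Real.exp_le_exp]
      have hsp : 0 < Real.sqrt (π / 2) := Real.sqrt_pos.mpr (by positivity)
      have : -a / 2 = -(Real.sqrt (π / 2)) * σL * s := by
        rw [hadef, hsqhalf]; ring
      rw [this]
      nlinarith [mul_le_mul_of_nonneg_left hσL (mul_pos hsp hs1).le]
    have h2 : (1:ℝ) ≤ 2 * N / σ ^ 2 := by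
      rw [le_div_iff₀ (by positivity)]
      nlinarith
    calc Real.exp (-a / 2) ≤ Real.exp (-(Real.sqrt (π / 2)) * N ^ (δ / 2) * s) := h1
      _ = 1 * Real.exp (-(Real.sqrt (π / 2)) * N ^ (δ / 2) * s) := (one_mul _).symm
      _ ≤ (2 * N / σ ^ 2) * Real.exp (-(Real.sqrt (π / 2)) * N ^ (δ / 2) * s) := by
          apply mul_le_mul_of_nonneg_right h2 (Real.exp_nonneg _)
  -- assemble
  have hPA0 : 0 ≤ (ℙ A).toReal := ENNReal.toReal_nonneg
  rw [hAeq]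
  calc (ℙ {ω | L ω < 0 ∧ L ω + n ω < 0}).toReal
      ≤ (ℙ (A ∩ B)).toReal + (ℙ C).toReal := hsplit
    _ = (ℙ A).toReal * (ℙ B).toReal + (ℙ C).toReal := by rw [hindep]
    _ ≤ (ℙ A).toReal * (1 / 2 + s) + Real.exp (-a / 2) * (ℙ A).toReal := by
        refine add_le_add (mul_le_mul_of_nonneg_left hBbound hPA0) hCbound
    _ ≤ (ℙ A).toReal * (1 / 2 + s)
        + ((2 * N / σ ^ 2) * Real.exp (-(Real.sqrt (π / 2)) * N ^ (δ / 2) * s)) * (ℙ A).toReal := by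
        refine add_le_add_right (mul_le_mul_of_nonneg_right hexp hPA0) _
    _ = (1 / 2 + s + (2 * N / σ ^ 2) * Real.exp (-(Real.sqrt (π / 2)) * N ^ (δ / 2) * s))
        * (ℙ A).toReal := by ring
end
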